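/- Let η_t (t ≥ 1) be a family of real-valued random variables, a a nonzero real number, σ > 0, b ∈ (0, 1/4], and C > 0 such that sup_{s∈ℝ} |P(√t (η_t − a) ≤ s) − Φ_σ(s)| ≤ C t^{−b} for all t ≥ 1, where Φ_σ is the distribution function of the centred normal law with variance σ². Then for any c > 0 there is a constant L > 0 depending only on a, σ, C, c such that sup_{s∈ℝ} |P(c√t (η_t^{−1} − a^{−1}) ≤ s) − Φ_{ĉσ}(s)| ≤ L t^{−b} for all t ≥ 1, where ĉσ = cσ/a². -/

import Mathlib

open MeasureTheory ProbabilityTheory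

/-- CDF of the centred normal law with variance `σ²`. -/
noncomputable def normalCDF (σ s : ℝ) : ℝ :=
  ((gaussianReal 0 ((σ ^ 2).toNNReal)) (Set.Iic s)).toReal

/-!
With `X_t = √t (η_t - a)`, the identity `y⁻¹ - a⁻¹ + (y - a) / a² = (y - a)² / (a² y)` shows that
on the event `|X_t| ≤ M_t`, `M_t² = √t · t^(-b)`, the statistic `c √t (η_t⁻¹ - a⁻¹)` is within
`2 c t^(-b) / |a|³` of `-c X_t / a²`, as soon as `t ≥ 16 / a⁴`. By symmetry and scaling of the
Gaussian, `-c X_t / a²` is within `C t^(-b)` of `N(0, (cσ/a²)²)` in Kolmogorov distance; moving the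
threshold by `O(t^(-b))` costs `O(t^(-b))` because the normal CDF is Lipschitz, and by Chebyshev the
exceptional event has probability `O(σ² / M_t² + C t^(-b))`, where `σ² / M_t² = σ² t^(b - 1/2)` is at
most `σ² t^(-b)` for `b ≤ 1/4`. For `t < 16 / a⁴` the bound is trivial.
-/

open Real Set Filter Topology

section NormalCDF

variable {σ : ℝ}

lemma normalCDF_eq_measureReal (σ s : ℝ) :
    normalCDF σ s = (gaussianReal 0 (σ ^ 2).toNNReal).real (Iic s) := rfl

lemma normalCDF_nonneg (σ s : ℝ) : 0 ≤ normalCDF σ s := measureReal_nonneg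

lemma normalCDF_le_one (σ s : ℝ) : normalCDF σ s ≤ 1 := measureReal_le_one

lemma toNNReal_sq_ne_zero (hσ : σ ≠ 0) : (σ ^ 2).toNNReal ≠ 0 := by
  simpa using hσ

lemma gaussianPDFReal_le_inv (hσ : 0 < σ) (x : ℝ) :
    gaussianPDFReal 0 (σ ^ 2).toNNReal x ≤ σ⁻¹ := by
  rw [gaussianPDFReal, Real.coe_toNNReal _ (sq_nonneg σ)]
  have hexp : rexp (-(x - 0) ^ 2 / (2 * σ ^ 2)) ≤ 1 :=
    exp_le_one_iff.2 (div_nonpos_of_nonpos_of_nonneg (by nlinarith [sq_nonneg x]) (by positivity))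
  have hsqrt : σ ≤ √(2 * π * σ ^ 2) :=
    le_sqrt_of_sq_le (by nlinarith [pi_gt_three, sq_nonneg σ])
  calc (√(2 * π * σ ^ 2))⁻¹ * rexp (-(x - 0) ^ 2 / (2 * σ ^ 2))
      ≤ (√(2 * π * σ ^ 2))⁻¹ * 1 := by gcongr
    _ ≤ σ⁻¹ := by rw [mul_one]; exact inv_anti₀ hσ hsqrt

lemma normalCDF_eq_integral (hσ : σ ≠ 0) (s : ℝ) :
    normalCDF σ s = ∫ x in Iic s, gaussianPDFReal 0 (σ ^ 2).toNNReal x := by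
  rw [normalCDF, gaussianReal_apply_eq_integral _ (toNNReal_sq_ne_zero hσ),
    ENNReal.toReal_ofReal (integral_nonneg fun x => gaussianPDFReal_nonneg _ _ _)]

lemma lipschitzWith_normalCDF (hσ : 0 < σ) :
    LipschitzWith ⟨σ⁻¹, (inv_pos.2 hσ).le⟩ (normalCDF σ) := by
  have hint := integrable_gaussianPDFReal 0 (σ ^ 2).toNNReal
  refine LipschitzWith.of_dist_le_mul fun x y => ?_
  rw [dist_comm, dist_comm x, Real.dist_eq, Real.dist_eq, normalCDF_eq_integral hσ.ne',
    normalCDF_eq_integral hσ.ne', intervalIntegral.integral_Iic_sub_Iic hint.integrableOn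
    hint.integrableOn, ← Real.norm_eq_abs]
  exact intervalIntegral.norm_integral_le_of_norm_le_const fun u _ => by
    rw [Real.norm_of_nonneg (gaussianPDFReal_nonneg _ _ _)]
    exact gaussianPDFReal_le_inv hσ u

lemma normalCDF_neg (hσ : σ ≠ 0) (x : ℝ) : normalCDF σ (-x) = 1 - normalCDF σ x := by
  have := nullSingletonClass_gaussianReal (μ := 0) (toNNReal_sq_ne_zero hσ)
  rw [normalCDF_eq_measureReal, normalCDF_eq_measureReal,
    ← probReal_compl_eq_one_sub measurableSet_Iic, compl_Iic, measureReal_congr Ioi_ae_eq_Ici]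
  have hmap := gaussianReal_map_neg (μ := 0) (v := (σ ^ 2).toNNReal)
  rw [neg_zero] at hmap
  conv_lhs => rw [← hmap]
  rw [map_measureReal_apply (by fun_prop) measurableSet_Iic]
  congr 1
  ext y
  simp

lemma normalCDF_mul (σ : ℝ) {k : ℝ} (hk : 0 < k) (x : ℝ) :
    normalCDF (k * σ) (k * x) = normalCDF σ x := by
  have hvar : ((k * σ) ^ 2).toNNReal = .mk (k ^ 2) (sq_nonneg _) * (σ ^ 2).toNNReal := by
    ext
    simp [mul_pow, mul_nonneg, sq_nonneg]
  have hmap := gaussianReal_map_const_mul (μ := 0) (v := (σ ^ 2).toNNReal) k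
  rw [mul_zero, ← hvar] at hmap
  rw [normalCDF_eq_measureReal, normalCDF_eq_measureReal, ← hmap,
    map_measureReal_apply (by fun_prop) measurableSet_Iic]
  congr 1
  ext y
  simp [mul_le_mul_iff_right₀ hk]

lemma normalCDF_neg_le_div_sq (σ : ℝ) {M : ℝ} (hM : 0 < M) :
    normalCDF σ (-M) ≤ σ ^ 2 / M ^ 2 := by
  have hcheb := meas_ge_le_variance_div_sq (μ := gaussianReal 0 (σ ^ 2).toNNReal)
    (memLp_id_gaussianReal 2) hM
  simp only [id, integral_id_gaussianReal, sub_zero, variance_id_gaussianReal,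
    Real.coe_toNNReal _ (sq_nonneg σ)] at hcheb
  calc normalCDF σ (-M) ≤ (gaussianReal 0 (σ ^ 2).toNNReal).real {x | M ≤ |x|} :=
        measureReal_mono fun x (hx : x ≤ -M) => show M ≤ |x| from le_abs.2 (Or.inr (by linarith))
    _ ≤ σ ^ 2 / M ^ 2 := by
        rw [measureReal_def]
        exact ENNReal.toReal_le_of_le_ofReal (by positivity) hcheb

end NormalCDF

section KolmogorovDistance

variable {Ω : Type*} [MeasurableSpace Ω] {P : Measure Ω} {X Y : Ω → ℝ} {G : ℝ → ℝ} {σ δ : ℝ}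

lemma abs_probReal_const_mul_le (hX : ∀ s, |P.real {ω | X ω ≤ s} - normalCDF σ s| ≤ δ)
    {k : ℝ} (hk : 0 < k) (s : ℝ) : |P.real {ω | k * X ω ≤ s} - normalCDF (k * σ) s| ≤ δ := by
  have hset : {ω | k * X ω ≤ s} = {ω | X ω ≤ s / k} := by
    ext ω
    simp [le_div_iff₀ hk, mul_comm]
  have hcdf := normalCDF_mul σ hk (s / k)
  rw [mul_div_cancel₀ s hk.ne'] at hcdf
  rw [hset, hcdf]
  exact hX _

variable [IsProbabilityMeasure P]

lemma abs_probReal_lt_sub_le (hX : ∀ s, |P.real {ω | X ω ≤ s} - G s| ≤ δ)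
    (hG : Continuous G) (s : ℝ) : |P.real {ω | X ω < s} - G s| ≤ δ := by
  rw [abs_sub_le_iff]
  constructor
  · have hle : P.real {ω | X ω < s} ≤ P.real {ω | X ω ≤ s} :=
      measureReal_mono fun ω (hω : X ω < s) => hω.le
    linarith [(abs_sub_le_iff.1 (hX s)).1]
  · have hlim : Tendsto (fun u => G u - δ) (𝓝[<] s) (𝓝 (G s - δ)) :=
      ((hG.tendsto s).mono_left nhdsWithin_le_nhds).sub_const δ
    refine sub_le_comm.1 (le_of_tendsto hlim (eventually_nhdsWithin_of_forall fun u hu => ?_))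
    have hle : P.real {ω | X ω ≤ u} ≤ P.real {ω | X ω < s} :=
      measureReal_mono fun ω (hω : X ω ≤ u) => show X ω < s from hω.trans_lt hu
    linarith [(abs_sub_le_iff.1 (hX u)).2]

lemma abs_probReal_neg_le (hmX : Measurable X) (hX : ∀ s, |P.real {ω | X ω ≤ s} - G s| ≤ δ)
    (hG : Continuous G) (hG_neg : ∀ s, G (-s) = 1 - G s) (s : ℝ) :
    |P.real {ω | -X ω ≤ s} - G s| ≤ δ := by
  have hcompl : {ω | -X ω ≤ s} = {ω | X ω < -s}ᶜ := by
    ext ω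
    simp [neg_le]
  rw [hcompl, probReal_compl_eq_one_sub (measurableSet_lt hmX measurable_const), ← abs_neg]
  convert abs_probReal_lt_sub_le hX hG (-s) using 2
  rw [hG_neg]
  ring

lemma abs_probReal_le_of_abs_sub_le {K : NNReal} {ε : ℝ}
    (hX : ∀ s, |P.real {ω | X ω ≤ s} - G s| ≤ δ) (hG : LipschitzWith K G) (hε : 0 ≤ ε)
    {E : Set Ω} (hXY : ∀ ω ∉ E, |Y ω - X ω| ≤ ε) (s : ℝ) :
    |P.real {ω | Y ω ≤ s} - G s| ≤ δ + K * ε + P.real E := by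
  have hclose : ∀ ω ∉ E, Y ω ≤ X ω + ε ∧ X ω ≤ Y ω + ε := fun ω hω => by
    have := abs_sub_le_iff.1 (hXY ω hω)
    constructor <;> linarith
  have hup : P.real {ω | Y ω ≤ s} ≤ P.real {ω | X ω ≤ s + ε} + P.real E := by
    refine (measureReal_mono fun ω (hω : Y ω ≤ s) => ?_).trans (measureReal_union_le _ _)
    by_cases hωE : ω ∈ E
    · exact Or.inr hωE
    · exact Or.inl (show X ω ≤ s + ε by linarith [(hclose ω hωE).2])
  have hlo : P.real {ω | X ω ≤ s - ε} ≤ P.real {ω | Y ω ≤ s} + P.real E := by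
    refine (measureReal_mono fun ω (hω : X ω ≤ s - ε) => ?_).trans (measureReal_union_le _ _)
    by_cases hωE : ω ∈ E
    · exact Or.inr hωE
    · exact Or.inl (show Y ω ≤ s by linarith [(hclose ω hωE).1])
  have hGup := (abs_sub_le_iff.1 (hG.dist_le_mul (s + ε) s)).1
  have hGlo := (abs_sub_le_iff.1 (hG.dist_le_mul s (s - ε))).1
  rw [Real.dist_eq, add_sub_cancel_left, abs_of_nonneg hε] at hGup
  rw [Real.dist_eq, sub_sub_cancel, abs_of_nonneg hε] at hGlo
  have hXup := (abs_sub_le_iff.1 (hX (s + ε))).1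
  have hXlo := (abs_sub_le_iff.1 (hX (s - ε))).2
  exact abs_sub_le_iff.2 ⟨by linarith, by linarith⟩

lemma probReal_lt_abs_le (hσ : σ ≠ 0) (hmX : Measurable X)
    (hX : ∀ s, |P.real {ω | X ω ≤ s} - normalCDF σ s| ≤ δ) (M : ℝ) :
    P.real {ω | M < |X ω|} ≤ 2 * (normalCDF σ (-M) + δ) := by
  have hsub : {ω | M < |X ω|} ⊆ {ω | X ω ≤ M}ᶜ ∪ {ω | X ω ≤ -M} := fun ω (hω : M < |X ω|) => by
    rcases lt_abs.1 hω with h | h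
    · exact Or.inl (not_le.2 h)
    · exact Or.inr (show X ω ≤ -M by linarith)
  have hright : P.real {ω | X ω ≤ M}ᶜ ≤ normalCDF σ (-M) + δ := by
    rw [probReal_compl_eq_one_sub (measurableSet_le hmX measurable_const), normalCDF_neg hσ]
    linarith [(abs_sub_le_iff.1 (hX M)).2]
  have hleft : P.real {ω | X ω ≤ -M} ≤ normalCDF σ (-M) + δ := by
    linarith [(abs_sub_le_iff.1 (hX (-M))).1]
  linarith [(measureReal_mono hsub).trans (measureReal_union_le (μ := P) _ _)]

end KolmogorovDistance

lemma abs_inv_sub_inv_add_le {a y : ℝ} (ha : a ≠ 0) (hy : |y - a| ≤ |a| / 2) :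
    |y⁻¹ - a⁻¹ + (y - a) / a ^ 2| ≤ 2 * (y - a) ^ 2 / |a| ^ 3 := by
  have hy_abs : |a| / 2 ≤ |y| := by
    have := abs_sub_abs_le_abs_sub a y
    rw [abs_sub_comm] at this
    linarith
  have hy0 : y ≠ 0 := by
    rintro rfl
    rw [abs_zero] at hy_abs
    linarith [abs_pos.2 ha]
  have hid : y⁻¹ - a⁻¹ + (y - a) / a ^ 2 = (y - a) ^ 2 / (a ^ 2 * y) := by
    field_simp
    ring
  have hden : |a| ^ 3 / 2 ≤ a ^ 2 * |y| := by
    rw [← sq_abs a]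
    nlinarith [sq_nonneg |a|]
  rw [hid, abs_div, abs_mul, abs_pow, sq_abs, abs_of_nonneg (sq_nonneg _)]
  calc (y - a) ^ 2 / (a ^ 2 * |y|) ≤ (y - a) ^ 2 / (|a| ^ 3 / 2) :=
        div_le_div_of_nonneg_left (sq_nonneg _) (by positivity) hden
    _ = 2 * (y - a) ^ 2 / |a| ^ 3 := by ring

lemma mul_abs_inv_sub_inv_add_le {a y n r : ℝ} (ha : a ≠ 0) (hn : 0 < n)
    (hra : 4 * r ≤ n * a ^ 2) (hy : n * (y - a) ^ 2 ≤ r) :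
    n * |y⁻¹ - a⁻¹ + (y - a) / a ^ 2| ≤ 2 / |a| ^ 3 * r := by
  have hya : |y - a| ≤ |a| / 2 := by
    rw [← abs_of_pos (by positivity : (0 : ℝ) < 2), ← abs_div, ← sq_le_sq, div_pow]
    nlinarith
  calc n * |y⁻¹ - a⁻¹ + (y - a) / a ^ 2| ≤ n * (2 * (y - a) ^ 2 / |a| ^ 3) := by
        gcongr
        exact abs_inv_sub_inv_add_le ha hya
    _ = 2 / |a| ^ 3 * (n * (y - a) ^ 2) := by ring
    _ ≤ 2 / |a| ^ 3 * r := by gcongr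

lemma abs_probReal_mul_inv_sub_inv_le {Ω : Type*} [MeasurableSpace Ω] {P : Measure Ω}
    [IsProbabilityMeasure P] {η : Ω → ℝ} (hη : Measurable η) {a σ c n r δ : ℝ} (ha : a ≠ 0)
    (hσ : 0 < σ) (hc : 0 < c) (hn : 0 < n) (hr : 0 < r) (hnr : 1 ≤ n * r ^ 2)
    (hra : 4 * r ≤ n * a ^ 2)
    (hX : ∀ s, |P.real {ω | n * (η ω - a) ≤ s} - normalCDF σ s| ≤ δ) (s : ℝ) :
    |P.real {ω | c * n * ((η ω)⁻¹ - a⁻¹) ≤ s} - normalCDF (c * σ / a ^ 2) s|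
      ≤ 3 * δ + (2 * σ ^ 2 + 2 / (σ * |a|)) * r := by
  -- `n` plays the role of `√t` and `r` that of `t ^ (-b)`.
  set X : Ω → ℝ := fun ω => n * (η ω - a)
  set M := √(n * r)
  have hM : M ^ 2 = n * r := sq_sqrt (by positivity)
  have hM0 : 0 < M := sqrt_pos.2 (by positivity)
  have hZ : ∀ s, |P.real {ω | c / a ^ 2 * -X ω ≤ s} - normalCDF (c / a ^ 2 * σ) s| ≤ δ :=
    abs_probReal_const_mul_le (abs_probReal_neg_le (by fun_prop) hX
      (lipschitzWith_normalCDF hσ).continuous (normalCDF_neg hσ.ne')) (by positivity)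
  have hbad : P.real {ω | M < |X ω|} ≤ 2 * (σ ^ 2 * r + δ) := by
    have htail : σ ^ 2 / M ^ 2 ≤ σ ^ 2 * r := by
      rw [hM, div_le_iff₀ (by positivity)]
      nlinarith [sq_nonneg σ]
    linarith [probReal_lt_abs_le hσ.ne' (by fun_prop) hX M, normalCDF_neg_le_div_sq σ hM0]
  have hclose : ∀ ω ∉ {ω | M < |X ω|},
      |c * n * ((η ω)⁻¹ - a⁻¹) - c / a ^ 2 * -X ω| ≤ 2 * c / |a| ^ 3 * r := by
    intro ω hω
    have hXM : n * |η ω - a| ≤ M := by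
      simpa [X, abs_mul, abs_of_pos hn] using hω
    have hsq : n * (η ω - a) ^ 2 ≤ r := by
      have h2 := pow_le_pow_left₀ (by positivity) hXM 2
      rw [mul_pow, sq_abs, hM, sq, mul_assoc] at h2
      exact le_of_mul_le_mul_left h2 hn
    calc |c * n * ((η ω)⁻¹ - a⁻¹) - c / a ^ 2 * -X ω|
        = |c * (n * ((η ω)⁻¹ - a⁻¹ + (η ω - a) / a ^ 2))| := by simp only [X]; ring_nf
      _ = c * (n * |(η ω)⁻¹ - a⁻¹ + (η ω - a) / a ^ 2|) := by
          rw [abs_mul, abs_mul, abs_of_pos hc, abs_of_pos hn]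
      _ ≤ c * (2 / |a| ^ 3 * r) :=
          mul_le_mul_of_nonneg_left (mul_abs_inv_sub_inv_add_le ha hn hra hsq) hc.le
      _ = 2 * c / |a| ^ 3 * r := by ring
  have hkey : |P.real {ω | c * n * ((η ω)⁻¹ - a⁻¹) ≤ s} - normalCDF (c / a ^ 2 * σ) s|
      ≤ δ + (c / a ^ 2 * σ)⁻¹ * (2 * c / |a| ^ 3 * r) + P.real {ω | M < |X ω|} :=
    abs_probReal_le_of_abs_sub_le hZ (lipschitzWith_normalCDF (by positivity)) (by positivity)
      hclose s
  have hconst : (c / a ^ 2 * σ)⁻¹ * (2 * c / |a| ^ 3 * r) = 2 / (σ * |a|) * r := by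
    rw [← sq_abs a]
    field_simp
  rw [show c * σ / a ^ 2 = c / a ^ 2 * σ by ring]
  linarith

/-- Quantitative Slutsky / delta-method for `x ↦ 1/x`. -/
theorem slutsky_inverse_rate
    {Ω : Type*} [MeasurableSpace Ω] (P : Measure Ω) [IsProbabilityMeasure P]
    (η : ℝ → Ω → ℝ) (hmeas : ∀ t, Measurable (η t))
    (a : ℝ) (ha : a ≠ 0) (σ : ℝ) (hσ : 0 < σ)
    (b : ℝ) (hb : b ∈ Set.Ioc (0 : ℝ) (1 / 4)) (C : ℝ) (hC : 0 < C)
    (h : ∀ t ≥ (1 : ℝ), ∀ s : ℝ,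
      |(P {ω | Real.sqrt t * (η t ω - a) ≤ s}).toReal - normalCDF σ s| ≤ C * t ^ (-b)) :
    ∀ c > (0 : ℝ), ∃ L > (0 : ℝ), ∀ t ≥ (1 : ℝ), ∀ s : ℝ,
      |(P {ω | c * Real.sqrt t * ((η t ω)⁻¹ - a⁻¹) ≤ s}).toReal
        - normalCDF (c * σ / a ^ 2) s| ≤ L * t ^ (-b) := by
  obtain ⟨hb0, hb4⟩ := hb
  intro c hc
  set T : ℝ := (4 / a ^ 2) ^ 2
  set K : ℝ := 3 * C + (2 * σ ^ 2 + 2 / (σ * |a|))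
  have hTb : 0 < T ^ b := rpow_pos_of_pos (by positivity) b
  refine ⟨K + T ^ b, by positivity, fun t ht s => ?_⟩
  have ht0 : 0 < t := by linarith
  have hr : 0 < t ^ (-b) := rpow_pos_of_pos ht0 _
  rcases lt_or_ge t T with hsmall | hlarge
  · have hone : 1 ≤ T ^ b * t ^ (-b) := by
      rw [rpow_neg ht0.le, ← div_eq_mul_inv, one_le_div (rpow_pos_of_pos ht0 b)]
      exact rpow_le_rpow ht0.le hsmall.le hb0.le
    calc _ ≤ 1 := abs_sub_le_of_nonneg_of_le measureReal_nonneg measureReal_le_one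
          (normalCDF_nonneg _ _) (normalCDF_le_one _ _)
      _ ≤ T ^ b * t ^ (-b) := hone
      _ ≤ (K + T ^ b) * t ^ (-b) := by gcongr; exact le_add_of_nonneg_left (by positivity)
  · have hnr : 1 ≤ √t * (t ^ (-b)) ^ 2 := by
      rw [sqrt_eq_rpow, ← rpow_natCast, ← rpow_mul ht0.le, ← rpow_add ht0]
      exact one_le_rpow ht (by push_cast; linarith)
    have hra : 4 * t ^ (-b) ≤ √t * a ^ 2 := by
      have hsqrt : 4 / a ^ 2 ≤ √t := by
        rw [← sqrt_sq (by positivity : 0 ≤ 4 / a ^ 2)]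
        exact sqrt_le_sqrt hlarge
      calc 4 * t ^ (-b) ≤ 4 / a ^ 2 * a ^ 2 := by
            rw [div_mul_cancel₀ _ (by positivity)]
            linarith [rpow_le_one_of_one_le_of_nonpos ht (by linarith : -b ≤ 0)]
        _ ≤ √t * a ^ 2 := by gcongr
    calc _ ≤ 3 * (C * t ^ (-b)) + (2 * σ ^ 2 + 2 / (σ * |a|)) * t ^ (-b) :=
          abs_probReal_mul_inv_sub_inv_le (hmeas t) ha hσ hc (sqrt_pos.2 ht0) hr hnr hra (h t ht) s
      _ ≤ (K + T ^ b) * t ^ (-b) := by nlinarith
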